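/- arXiv:0910.4636 — 2 statements merged into one kernel-verified Lean document; each statement's English description precedes it below -/
import Mathlib

section
/- For any row-stochastic matrix A on a finite state space S and any two probability vectors π₁, π₂ on S, the total variation distance between A'π₁ and A'π₂ satisfies ‖A'π₁ − A'π₂‖ ≤ δ(A)·‖π₁ − π₂‖, where δ(A) = (1/2)·sup_{i,j} ‖A(i,·) − A(j,·)‖ is the Dobrushin coefficient of A. -/
/-!
Write `f = π₁ - π₂ = f⁺ - f⁻`. Since `∑ f = 0`, the two parts have the same mass `m = ‖f‖ / 2`,
and `m • ∑ᵢ fᵢ Aᵢ = ∑ᵢ ∑ⱼ f⁺ᵢ f⁻ⱼ (Aᵢ - Aⱼ)`: a combination of differences of rows with total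
weight `m²`, each difference of norm at most `2 δ(A)`. Dividing by `m` gives the bound.
-/

open Finset

/-- Dobrushin coefficient of a matrix `A` on a finite state space. -/
noncomputable def dobrushin {S : Type*} [Fintype S] [Nonempty S] (A : S → S → ℝ) : ℝ :=
  (1 / 2) * (Finset.univ.sup' Finset.univ_nonempty
    (fun p : S × S => ∑ k, |A p.1 k - A p.2 k|))

section

variable {ι : Type*} [Fintype ι]

lemma sum_sum_mul_smul_sub {R E : Type*} [CommRing R] [AddCommGroup E] [Module R E]
    (p q : ι → R) (v : ι → E) :
    ∑ i, ∑ j, (p i * q j) • (v i - v j) =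
      (∑ j, q j) • ∑ i, p i • v i - (∑ i, p i) • ∑ j, q j • v j := by
  simp only [smul_sub, sum_sub_distrib, smul_sum, sum_smul, mul_smul]
  rw [sum_comm (f := fun i j => p i • q j • v j)]
  simp only [smul_comm (p _) (q _)]

variable {E : Type*} [SeminormedAddCommGroup E] [NormedSpace ℝ E]

lemma norm_sum_sum_mul_smul_sub_le {p q : ι → ℝ} (hp : ∀ i, 0 ≤ p i) (hq : ∀ j, 0 ≤ q j)
    {v : ι → E} {D : ℝ} (hv : ∀ i j, ‖v i - v j‖ ≤ D) :
    ‖∑ i, ∑ j, (p i * q j) • (v i - v j)‖ ≤ (∑ i, p i) * (∑ j, q j) * D :=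
  calc ‖∑ i, ∑ j, (p i * q j) • (v i - v j)‖
      ≤ ∑ i, ∑ j, ‖(p i * q j) • (v i - v j)‖ :=
        (norm_sum_le _ _).trans (sum_le_sum fun i _ => norm_sum_le _ _)
    _ ≤ ∑ i, ∑ j, p i * q j * D := by
        gcongr with i _ j _
        rw [norm_smul, Real.norm_of_nonneg (mul_nonneg (hp i) (hq j))]
        exact mul_le_mul_of_nonneg_left (hv i j) (mul_nonneg (hp i) (hq j))
    _ = (∑ i, p i) * (∑ j, q j) * D := by rw [sum_mul_sum, sum_mul]; simp only [sum_mul]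

theorem norm_sum_smul_le_of_sum_eq_zero {f : ι → ℝ} (hf : ∑ i, f i = 0) {v : ι → E} {c : ℝ}
    (hv : ∀ i j, ‖v i - v j‖ ≤ 2 * c) :
    ‖∑ i, f i • v i‖ ≤ c * ∑ i, |f i| := by
  set m := ∑ i, (f i)⁺
  have hneg : ∑ i, (f i)⁻ = m := by
    have hdiff : ∑ i, ((f i)⁺ - (f i)⁻) = 0 := by simpa only [posPart_sub_negPart] using hf
    rw [sum_sub_distrib, sub_eq_zero] at hdiff
    exact hdiff.symm
  have habs : ∑ i, |f i| = 2 * m := by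
    simp only [← posPart_add_negPart, sum_add_distrib, hneg]; ring
  have hsplit : m • ∑ i, f i • v i = ∑ i, ∑ j, ((f i)⁺ * (f j)⁻) • (v i - v j) := by
    rw [sum_sum_mul_smul_sub, hneg, ← smul_sub, ← sum_sub_distrib]
    simp only [← sub_smul, posPart_sub_negPart]
  have hm0 : 0 ≤ m := sum_nonneg fun i _ => posPart_nonneg (f i)
  have hbound : m * ‖∑ i, f i • v i‖ ≤ m * (m * (2 * c)) :=
    calc m * ‖∑ i, f i • v i‖ = ‖∑ i, ∑ j, ((f i)⁺ * (f j)⁻) • (v i - v j)‖ := by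
          rw [← hsplit, norm_smul, Real.norm_of_nonneg hm0]
      _ ≤ m * (∑ j, (f j)⁻) * (2 * c) :=
          norm_sum_sum_mul_smul_sub_le (fun i => posPart_nonneg _) (fun j => negPart_nonneg _) hv
      _ = m * (m * (2 * c)) := by rw [hneg, mul_assoc]
  rcases hm0.eq_or_lt with hm | hm
  · have hf0 : ∀ i, f i = 0 := by
      have habs0 := (sum_eq_zero_iff_of_nonneg fun i _ => abs_nonneg (f i)).mp
        (by rw [habs, ← hm]; ring)
      exact fun i => abs_eq_zero.mp (habs0 i (mem_univ i))
    simp [hf0]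
  · rw [habs]
    exact (le_of_mul_le_mul_left hbound hm).trans_eq (by ring)

end

lemma sum_abs_sub_le_two_mul_dobrushin {S : Type*} [Fintype S] [Nonempty S] (A : S → S → ℝ)
    (i j : S) : ∑ k, |A i k - A j k| ≤ 2 * dobrushin A := by
  have := le_sup' (fun p : S × S => ∑ k, |A p.1 k - A p.2 k|) (mem_univ (i, j))
  rw [dobrushin]
  linarith

theorem tv_contraction_dobrushin_general {S : Type*} [Fintype S] [Nonempty S]
    (A : S → S → ℝ)
    (π₁ π₂ : S → ℝ) (hπ₁1 : ∑ i, π₁ i = 1)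
    (hπ₂1 : ∑ i, π₂ i = 1) :
    ∑ j, |(∑ i, π₁ i * A i j) - (∑ i, π₂ i * A i j)| ≤
      dobrushin A * ∑ i, |π₁ i - π₂ i| := by
  -- The total variation norm is the norm of `PiLp 1`.
  have key := norm_sum_smul_le_of_sum_eq_zero (f := fun i => π₁ i - π₂ i)
    (v := fun i => WithLp.toLp 1 (A i))
    (by simp [sum_sub_distrib, hπ₁1, hπ₂1])
    (fun i j => by simpa [PiLp.norm_eq_of_L1] using sum_abs_sub_le_two_mul_dobrushin A i j)
  convert key using 1
  rw [PiLp.norm_eq_of_L1]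
  simp [← sum_sub_distrib, sub_mul]

/-- For a row-stochastic matrix `A` and probability vectors `π₁, π₂`,
`‖A'π₁ − A'π₂‖ ≤ δ(A)·‖π₁ − π₂‖`. -/
theorem tv_contraction_dobrushin {S : Type*} [Fintype S] [Nonempty S]
    (A : S → S → ℝ) (hA0 : ∀ i j, 0 ≤ A i j) (hA1 : ∀ i, ∑ j, A i j = 1)
    (π₁ π₂ : S → ℝ) (hπ₁0 : ∀ i, 0 ≤ π₁ i) (hπ₁1 : ∑ i, π₁ i = 1)
    (hπ₂0 : ∀ i, 0 ≤ π₂ i) (hπ₂1 : ∑ i, π₂ i = 1) :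
    ∑ j, |(∑ i, π₁ i * A i j) - (∑ i, π₂ i * A i j)| ≤
      dobrushin A * ∑ i, |π₁ i - π₂ i| :=
  tv_contraction_dobrushin_general A π₁ π₂ hπ₁1 hπ₂1
end

section
/- Let A be a row-stochastic K×K matrix of the form A(i,j) = u(i,j)·b(j) / Σ_k u(i,k)·b(k), where u(i,j) ≥ c·v(j) > 0 bounded entrywise as c·v(j) ≤ u(i,j) ≤ C·v(j) with 0 < c ≤ C, v(j) > 0, and b(j) ≥ 0 with Σ_j u(i,j)b(j) > 0 for all i. Then A satisfies the Doeblin condition with ε = c/C and λ(j) = v(j)b(j)/Σ_k v(k)b(k), and hence δ(A) ≤ 1 − c/C. -/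
/-!
Every row of `A` dominates `(c / C) • λ` entrywise: the numerator `u i j * b j` is at least
`c * v j * b j`, while the normalizer `∑ k, u i k * b k` is at most `C * ∑ k, v k * b k`.
Two probability vectors that both dominate `ε • λ`, with `λ` of total mass one, are at
`ℓ¹`-distance at most `2 * (1 - ε)`, since each entry of their difference is bounded by the sum
of the two excesses over `ε * λ k`.
-/

open Finset

section Doeblin

variable {ι : Type*} [Fintype ι]

theorem sum_abs_sub_le_of_common_minorant {p q lam : ι → ℝ} {ε : ℝ}
    (hp : ∑ k, p k = 1) (hq : ∑ k, q k = 1) (hlam : ∑ k, lam k = 1)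
    (hpl : ∀ k, ε * lam k ≤ p k) (hql : ∀ k, ε * lam k ≤ q k) :
    ∑ k, |p k - q k| ≤ 2 * (1 - ε) :=
  calc ∑ k, |p k - q k|
      ≤ ∑ k, ((p k - ε * lam k) + (q k - ε * lam k)) :=
        sum_le_sum fun k _ =>
          abs_sub_le_iff.2 ⟨by linarith [hql k], by linarith [hpl k]⟩
    _ = 2 * (1 - ε) := by
        rw [sum_add_distrib, sum_sub_distrib, sum_sub_distrib, ← mul_sum, hp, hq, hlam]
        ring

theorem dobrushin_le_one_sub_of_minorant [Nonempty ι] {A : ι → ι → ℝ} {lam : ι → ℝ} {ε : ℝ}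
    (hrow : ∀ i, ∑ k, A i k = 1) (hlam : ∑ k, lam k = 1) (hmin : ∀ i k, ε * lam k ≤ A i k) :
    dobrushin A ≤ 1 - ε := by
  have hpair : ∀ p : ι × ι, ∑ k, |A p.1 k - A p.2 k| ≤ 2 * (1 - ε) := fun p =>
    sum_abs_sub_le_of_common_minorant (hrow p.1) (hrow p.2) hlam (hmin p.1) (hmin p.2)
  have hsup := sup'_le univ_nonempty _ fun p _ => hpair p
  unfold dobrushin
  linarith

theorem sum_div_sum_eq_one {f : ι → ℝ} (hf : ∑ k, f k ≠ 0) : ∑ k, f k / ∑ k', f k' = 1 := by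
  rw [← sum_div, div_self hf]

theorem sum_mul_le_mul_sum_of_le {u v b : ι → ℝ} {C : ℝ}
    (hup : ∀ j, u j ≤ C * v j) (hb : ∀ j, 0 ≤ b j) :
    ∑ k, u k * b k ≤ C * ∑ k, v k * b k := by
  rw [mul_sum]
  refine sum_le_sum fun k _ => ?_
  rw [← mul_assoc]
  exact mul_le_mul_of_nonneg_right (hup k) (hb k)

theorem le_normalized_of_comparable {u v b : ι → ℝ} {c C : ℝ}
    (hc : 0 ≤ c) (hv : ∀ j, 0 ≤ v j) (hlow : ∀ j, c * v j ≤ u j) (hup : ∀ j, u j ≤ C * v j)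
    (hb : ∀ j, 0 ≤ b j) (hpos : 0 < ∑ k, u k * b k) (j : ι) :
    (c / C) * (v j * b j / ∑ k, v k * b k) ≤ u j * b j / ∑ k, u k * b k := by
  have hu : 0 ≤ u j := (mul_nonneg hc (hv j)).trans (hlow j)
  rw [div_mul_div_comm, ← mul_assoc]
  exact div_le_div₀ (mul_nonneg hu (hb j)) (mul_le_mul_of_nonneg_right (hlow j) (hb j)) hpos
    (sum_mul_le_mul_sum_of_le hup hb)

end Doeblin

theorem doeblin_of_comparable_kernel_general {K : ℕ} [NeZero K]
    (u : Fin K → Fin K → ℝ) (b v : Fin K → ℝ) (c C : ℝ)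
    (hc : 0 < c) (hcC : c ≤ C)
    (hv : ∀ j, 0 < v j)
    (hlow : ∀ i j, c * v j ≤ u i j) (hup : ∀ i j, u i j ≤ C * v j)
    (hb : ∀ j, 0 ≤ b j)
    (hpos : ∀ i, 0 < ∑ k, u i k * b k) :
    (∀ i j, (c / C) * (v j * b j / ∑ k, v k * b k) ≤
        u i j * b j / ∑ k, u i k * b k) ∧
    dobrushin (fun i j => u i j * b j / ∑ k, u i k * b k) ≤ 1 - c / C := by
  have hmin : ∀ i j, (c / C) * (v j * b j / ∑ k, v k * b k) ≤
      u i j * b j / ∑ k, u i k * b k := fun i =>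
    le_normalized_of_comparable hc.le (fun j => (hv j).le) (hlow i) (hup i) hb (hpos i)
  have hvb : 0 < ∑ k, v k * b k :=
    pos_of_mul_pos_right ((hpos 0).trans_le (sum_mul_le_mul_sum_of_le (hup 0) hb))
      (hc.le.trans hcC)
  exact ⟨hmin, dobrushin_le_one_sub_of_minorant (fun i => sum_div_sum_eq_one (hpos i).ne')
    (sum_div_sum_eq_one hvb.ne') hmin⟩

/-- Normalized matrices with entrywise-comparable kernels satisfy the Doeblin
condition with `ε = c/C` and `λ(j) = v(j)b(j)/Σ_k v(k)b(k)`, hence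
`δ(A) ≤ 1 − c/C`. -/
theorem doeblin_of_comparable_kernel {K : ℕ} [NeZero K] (hK : 0 < K)
    (u : Fin K → Fin K → ℝ) (b v : Fin K → ℝ) (c C : ℝ)
    (hc : 0 < c) (hcC : c ≤ C)
    (hv : ∀ j, 0 < v j)
    (hlow : ∀ i j, c * v j ≤ u i j) (hup : ∀ i j, u i j ≤ C * v j)
    (hb : ∀ j, 0 ≤ b j)
    (hpos : ∀ i, 0 < ∑ k, u i k * b k) :
    (∀ i j, (c / C) * (v j * b j / ∑ k, v k * b k) ≤
        u i j * b j / ∑ k, u i k * b k) ∧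
    dobrushin (fun i j => u i j * b j / ∑ k, u i k * b k) ≤ 1 - c / C :=
  doeblin_of_comparable_kernel_general u b v c C hc hcC hv hlow hup hb hpos
end
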